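/- arXiv:2505.11044 — 4 statements merged into one kernel-verified Lean document; each statement's English description precedes it below -/
import Mathlib

section
/- The DRND statistic is an unbiased estimator of the reciprocal visit count: E[y_n] = 1/n. -/
open MeasureTheory ProbabilityTheory Finset
open scoped NNReal ENNReal

/-!
`E[f̄²] = Var[f̄] + E[f̄]²`. The mean of `f̄` is `μ`, and since variances of independent
variables add, `Var[f̄] = n σ² / n² = σ² / n`. Hence `E[f̄² − μ²] = σ² / n`.
-/

namespace ProbabilityTheory

variable {Ω : Type*} {mΩ : MeasurableSpace Ω} {P : Measure Ω}

lemma hasLaw_of_map_eq {𝓧 : Type*} {m𝓧 : MeasurableSpace 𝓧} {X : Ω → 𝓧} {ν : Measure 𝓧}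
    [IsProbabilityMeasure ν] (h : P.map X = ν) : HasLaw X ν P :=
  ⟨.of_map_ne_zero (h ▸ IsProbabilityMeasure.ne_zero ν), h⟩

section Gaussian

variable {X : Ω → ℝ} {μ : ℝ} {v : ℝ≥0}

lemma HasLaw.memLp_gaussianReal (hX : HasLaw X (gaussianReal μ v) P) (p : ℝ≥0) :
    MemLp X p P :=
  (memLp_map_measure_iff aestronglyMeasurable_id hX.aemeasurable).1
    (hX.map_eq ▸ memLp_id_gaussianReal p)

lemma HasLaw.integral_gaussianReal (hX : HasLaw X (gaussianReal μ v) P) : P[X] = μ :=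
  hX.integral_eq.trans integral_id_gaussianReal

lemma HasLaw.variance_gaussianReal (hX : HasLaw X (gaussianReal μ v) P) : Var[X; P] = v :=
  hX.variance_eq.trans variance_id_gaussianReal

end Gaussian

section SampleMean

variable {ι : Type*} [Fintype ι] {X : ι → Ω → ℝ}

lemma memLp_sampleMean {p : ℝ≥0∞} (hX : ∀ i, MemLp (X i) p P) :
    MemLp (fun ω ↦ (∑ i, X i ω) / Fintype.card ι) p P := by
  simpa only [Finset.sum_apply, div_eq_mul_inv] using
    (memLp_finsetSum' _ fun i _ ↦ hX i).mul_const (Fintype.card ι : ℝ)⁻¹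

variable [IsProbabilityMeasure P] [Nonempty ι] {m v : ℝ}

lemma integral_sq_sampleMean (hX : ∀ i, MemLp (X i) 2 P)
    (hindep : Pairwise fun i j ↦ X i ⟂ᵢ[P] X j)
    (hmean : ∀ i, P[X i] = m) (hvar : ∀ i, Var[X i; P] = v) :
    ∫ ω, ((∑ i, X i ω) / Fintype.card ι) ^ 2 ∂P = v / Fintype.card ι + m ^ 2 := by
  set c : ℝ := (Fintype.card ι : ℝ)
  have hmean_bar : P[fun ω ↦ (∑ i, X i ω) / c] = m := by
    rw [integral_div, integral_finsetSum _ fun i _ ↦ (hX i).integrable one_le_two]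
    simp [hmean, c]
  have hvar_bar : Var[fun ω ↦ (∑ i, X i ω) / c; P] = v / c := by
    have h := variance_const_mul c⁻¹ (∑ i, X i) P
    rw [IndepFun.variance_sum (fun i _ ↦ hX i) fun i _ j _ hij ↦ hindep hij] at h
    simp only [Finset.sum_apply, hvar, sum_const, card_univ, nsmul_eq_mul] at h
    convert h using 2
    · ext ω; ring
    · simp only [c]; field_simp
  have h := variance_eq_sub (memLp_sampleMean hX)
  rw [hvar_bar, hmean_bar] at h
  simp only [Pi.pow_apply] at h
  linarith

end SampleMean

end ProbabilityTheory

theorem drnd_unbiased_general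
    {Ω : Type*} [MeasurableSpace Ω] (P : Measure Ω) [IsProbabilityMeasure P]
    (n : ℕ) (hn : 0 < n) (μ σ : ℝ) (hσ : 0 < σ)
    (f : Fin n → Ω → ℝ)
    (hindep : iIndepFun f P)
    (hdist : ∀ i, Measure.map (f i) P = gaussianReal μ ⟨σ ^ 2, sq_nonneg σ⟩) :
    ∫ ω, (((∑ i, f i ω) / n) ^ 2 - μ ^ 2) / σ ^ 2 ∂P = 1 / n := by
  set v : ℝ≥0 := ⟨σ ^ 2, sq_nonneg σ⟩
  have hv : (v : ℝ) = σ ^ 2 := rfl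
  have hlaw i : HasLaw (f i) (gaussianReal μ v) P := hasLaw_of_map_eq (hdist i)
  have hmemLp i : MemLp (f i) 2 P := (hlaw i).memLp_gaussianReal 2
  have : NeZero n := ⟨hn.ne'⟩
  have hmoment := integral_sq_sampleMean hmemLp (fun i j hij ↦ hindep.indepFun hij)
    (fun i ↦ (hlaw i).integral_gaussianReal) (fun i ↦ (hlaw i).variance_gaussianReal)
  have hint := (memLp_sampleMean hmemLp).integrable_sq
  rw [Fintype.card_fin] at hmoment hint
  rw [integral_div, integral_sub hint (integrable_const _), hmoment, integral_const, hv,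
    probReal_univ, one_smul, add_sub_cancel_right]
  field_simp

/-- The DRND statistic is an unbiased estimator of the reciprocal visit count:
`E[y_n] = 1/n`, where `y_n = (f̄² − μ²)/σ²` and `f̄` is the sample mean of `n`
i.i.d. Gaussian `N(μ, σ²)` random variables. -/
theorem drnd_unbiased
    {Ω : Type*} [MeasurableSpace Ω] (P : Measure Ω) [IsProbabilityMeasure P]
    (n : ℕ) (hn : 0 < n) (μ σ : ℝ) (hσ : 0 < σ)
    (f : Fin n → Ω → ℝ) (hmeas : ∀ i, Measurable (f i))
    (hindep : iIndepFun f P)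
    (hdist : ∀ i, Measure.map (f i) P = gaussianReal μ ⟨σ ^ 2, sq_nonneg σ⟩) :
    ∫ ω, (((∑ i, f i ω) / n) ^ 2 - μ ^ 2) / σ ^ 2 ∂P = 1 / n :=
  drnd_unbiased_general P n hn μ σ hσ f hindep hdist
end

section
/- The variance of the DRND statistic equals Var[y_n] = 2/n² + 4μ²/(n σ²). -/
/-!
The sample mean of `n` independent `N(μ, σ²)` variables is `N(μ, σ²/n)`: a sum of independent
Gaussians is Gaussian, and its mean and variance add up. For `X ~ N(m, v)` the `k`-th moment is the
`k`-th derivative at `0` of the moment generating function `exp (m t + v t² / 2)`, which gives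
`E X² = m² + v` and `E X⁴ = m⁴ + 6 m² v + 3 v²`, hence `Var X² = 2 v² + 4 m² v`. Taking
`m = μ`, `v = σ²/n` and dividing by `σ⁴` yields the variance of the statistic.
-/

open MeasureTheory ProbabilityTheory Finset
open scoped NNReal

open Polynomial in
/-- `(gaussianMomentPoly v k).eval m` is the `k`-th moment of `N(m, v)`: the `k`-th derivative of
`exp (m t + v t² / 2)` is this polynomial evaluated at `m + v t`, times the exponential. -/
noncomputable def gaussianMomentPoly (v : ℝ) : ℕ → ℝ[X]
  | 0 => 1
  | k + 1 => C v * derivative (gaussianMomentPoly v k) + X * gaussianMomentPoly v k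

open Polynomial in
lemma iteratedDeriv_exp_mul_add_sq (m v : ℝ) (k : ℕ) :
    iteratedDeriv k (fun t ↦ Real.exp (m * t + v * t ^ 2 / 2)) =
      fun t ↦ (gaussianMomentPoly v k).eval (m + v * t) * Real.exp (m * t + v * t ^ 2 / 2) := by
  induction k with
  | zero => simp [gaussianMomentPoly]
  | succ k ih =>
    rw [iteratedDeriv_succ, ih]
    funext t
    have hpoly : HasDerivAt (fun t ↦ (gaussianMomentPoly v k).eval (m + v * t))
        ((gaussianMomentPoly v k).derivative.eval (m + v * t) * v) t :=
      (Polynomial.hasDerivAt _ _).comp t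
        ((((hasDerivAt_id t).const_mul v).const_add m).congr_deriv (by simp))
    have hexponent : HasDerivAt (fun t ↦ m * t + v * t ^ 2 / 2) (m + v * t) t :=
      (((hasDerivAt_id' t).const_mul m).fun_add
        (((hasDerivAt_pow 2 t).const_mul v).div_const 2)).congr_deriv (by norm_num; ring)
    rw [(hpoly.fun_mul hexponent.exp).deriv]
    simp only [gaussianMomentPoly, eval_add, eval_mul, eval_C, eval_X]
    ring

lemma integral_pow_gaussianReal (m : ℝ) (v : ℝ≥0) (k : ℕ) :
    ∫ x, x ^ k ∂gaussianReal m v = (gaussianMomentPoly v k).eval m := by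
  have h := iteratedDeriv_mgf_zero (X := id) (μ := gaussianReal m v) (by simp) k
  rw [mgf_id_gaussianReal, iteratedDeriv_exp_mul_add_sq] at h
  simpa using h.symm

open Polynomial in
lemma variance_sq_gaussianReal (m : ℝ) (v : ℝ≥0) :
    Var[fun x ↦ x ^ 2; gaussianReal m v] = 2 * v ^ 2 + 4 * m ^ 2 * v := by
  have hpow4 : Integrable (fun x : ℝ ↦ x ^ 4) (gaussianReal m v) :=
    integrable_pow_of_mem_interior_integrableExpSet (X := fun x ↦ x) (by simp) 4
  have hL2 : MemLp (fun x : ℝ ↦ x ^ 2) 2 (gaussianReal m v) :=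
    (memLp_two_iff_integrable_sq (by fun_prop)).2 (by simpa [← pow_mul] using hpow4)
  rw [variance_eq_sub hL2]
  simp only [Pi.pow_apply, ← pow_mul, integral_pow_gaussianReal, gaussianMomentPoly,
    derivative_one, derivative_X, derivative_add, derivative_C, derivative_mul, eval_add, eval_mul,
    eval_C, eval_one, eval_X, mul_zero, mul_one, zero_add, one_mul, zero_mul]
  ring

lemma iIndepFun.hasLaw_sum_gaussianReal {Ω ι : Type*} [MeasurableSpace Ω] {P : Measure Ω}
    [Fintype ι] {X : ι → Ω → ℝ} {m : ι → ℝ} {v : ι → ℝ≥0} (hind : iIndepFun X P)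
    (hX : ∀ i, HasLaw (X i) (gaussianReal (m i) (v i)) P) :
    HasLaw (fun ω ↦ ∑ i, X i ω) (gaussianReal (∑ i, m i) (∑ i, v i)) P := by
  have hG : HasGaussianLaw (fun ω ↦ ∑ i, X i ω) P :=
    hind.hasGaussianLaw_fun_sum fun i ↦ (hX i).hasGaussianLaw
  have := hG.isProbabilityMeasure
  have hmean : P[fun ω ↦ ∑ i, X i ω] = ∑ i, m i := by
    rw [integral_finsetSum _ fun i _ ↦ (hX i).hasGaussianLaw.integrable]
    simp [fun i ↦ (hX i).integral_eq]
  have hvar : Var[fun ω ↦ ∑ i, X i ω; P] = ∑ i, (v i : ℝ) := by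
    rw [← Finset.sum_fn, IndepFun.variance_sum (fun i _ ↦ (hX i).hasGaussianLaw.memLp_two)
      fun i _ j _ hij ↦ hind.indepFun hij]
    simp [fun i ↦ (hX i).variance_eq]
  refine ⟨hG.aemeasurable, ?_⟩
  rw [hG.map_eq_gaussianReal, hmean, hvar, ← NNReal.coe_sum, Real.toNNReal_coe]

theorem drnd_variance_general
    {Ω : Type*} [MeasurableSpace Ω] (P : Measure Ω)
    (n : ℕ) (μ σ : ℝ) (hσ : 0 < σ)
    (f : Fin n → Ω → ℝ)
    (hindep : iIndepFun f P)
    (hdist : ∀ i, Measure.map (f i) P = gaussianReal μ ⟨σ ^ 2, sq_nonneg σ⟩) :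
    variance (fun ω => (((∑ i, f i ω) / n) ^ 2 - μ ^ 2) / σ ^ 2) P =
      2 / n ^ 2 + 4 * μ ^ 2 / (n * σ ^ 2) := by
  -- `⟨σ ^ 2, _⟩` elaborates to a bare subtype, on which the `ℝ≥0` instances are not found.
  have hlaw (i : Fin n) : HasLaw (f i) (gaussianReal μ (σ ^ 2).toNNReal) P := by
    have hmap : P.map (f i) = gaussianReal μ (σ ^ 2).toNNReal :=
      (hdist i).trans (congrArg _ (Real.toNNReal_of_nonneg (sq_nonneg σ)).symm)
    exact ⟨aemeasurable_of_map_neZero (by rw [hmap]; infer_instance), hmap⟩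
  have hmean := HasLaw.comp ⟨by fun_prop, gaussianReal_map_div_const (n : ℝ)⟩
    (iIndepFun.hasLaw_sum_gaussianReal hindep hlaw)
  rw [show (fun ω ↦ (((∑ i, f i ω) / n) ^ 2 - μ ^ 2) / σ ^ 2) =
      (fun x ↦ (x ^ 2 - μ ^ 2) / σ ^ 2) ∘ ((· / (n : ℝ)) ∘ fun ω ↦ ∑ i, f i ω) from rfl,
    ← variance_map (by fun_prop) hmean.aemeasurable, hmean.map_eq]
  simp_rw [div_eq_mul_inv _ (σ ^ 2)]
  rw [variance_mul_const, variance_sub_const (by fun_prop), variance_sq_gaussianReal]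
  simp only [sum_const, card_univ, Fintype.card_fin, nsmul_eq_mul, NNReal.coe_div, NNReal.coe_mul,
    NNReal.coe_natCast, NNReal.coe_mk, Real.coe_toNNReal _ (sq_nonneg σ)]
  field_simp

/-- The variance of the DRND statistic equals `Var[y_n] = 2/n² + 4μ²/(n σ²)`,
where `y_n = (f̄² − μ²)/σ²` and `f̄` is the sample mean of `n` i.i.d. Gaussian
`N(μ, σ²)` random variables. -/
theorem drnd_variance
    {Ω : Type*} [MeasurableSpace Ω] (P : Measure Ω) [IsProbabilityMeasure P]
    (n : ℕ) (hn : 0 < n) (μ σ : ℝ) (hσ : 0 < σ)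
    (f : Fin n → Ω → ℝ) (hmeas : ∀ i, Measurable (f i))
    (hindep : iIndepFun f P)
    (hdist : ∀ i, Measure.map (f i) P = gaussianReal μ ⟨σ ^ 2, sq_nonneg σ⟩) :
    variance (fun ω => (((∑ i, f i ω) / n) ^ 2 - μ ^ 2) / σ ^ 2) P =
      2 / n ^ 2 + 4 * μ ^ 2 / (n * σ ^ 2) :=
  drnd_variance_general P n μ σ hσ f hindep hdist
end

section
/- The RDD statistic has the same expectation as the DRND statistic, E[z_n] = E[y_n] = 1/n, and achieves variance reduction: Var(z_n) ≤ Var(y_n). -/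
/-!
The standardized sample mean `X = (f̄ - μ) / σ` is centered Gaussian with variance `1 / n`, and
`z_n = X²`, `y_n = X² + (2μ/σ) X`. Both therefore have mean `E[X²] = 1 / n`. Since the odd moments
of a centered Gaussian vanish, `X²` and `X` are uncorrelated, so
`Var(y_n) = Var(z_n) + (2μ/σ)² / n`.
-/

open MeasureTheory ProbabilityTheory Finset
open scoped NNReal ENNReal

namespace ProbabilityTheory

variable {Ω : Type*} [MeasurableSpace Ω] {P : Measure Ω}

lemma iIndepFun.hasLaw_sum_gaussianReal {ι : Type*} [Fintype ι]
    {X : ι → Ω → ℝ} {m : ι → ℝ} {v : ι → ℝ≥0}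
    (hX : ∀ i, HasLaw (X i) (gaussianReal (m i) (v i)) P) (hindep : iIndepFun X P) :
    HasLaw (fun ω ↦ ∑ i, X i ω) (gaussianReal (∑ i, m i) (∑ i, v i)) P := by
  have hG := hindep.hasGaussianLaw_fun_sum fun i ↦ (hX i).hasGaussianLaw
  have hmean : P[fun ω ↦ ∑ i, X i ω] = ∑ i, m i := by
    rw [integral_finsetSum _ fun i _ ↦ (hX i).hasGaussianLaw.integrable]
    simp [(hX _).integral_eq]
  have hvar : Var[fun ω ↦ ∑ i, X i ω; P] = ∑ i, (v i : ℝ) := by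
    have h := IndepFun.variance_sum (s := univ) (fun i _ ↦ (hX i).hasGaussianLaw.memLp_two)
      (fun i _ j _ hij ↦ hindep.indepFun hij)
    simp_rw [(hX _).variance_eq, variance_id_gaussianReal] at h
    rw [← Finset.sum_fn]
    simpa using h
  refine ⟨hG.aemeasurable, ?_⟩
  rw [hG.map_eq_gaussianReal, hmean, hvar, ← NNReal.coe_sum, Real.toNNReal_coe]

lemma iIndepFun.hasLaw_sampleMean {n : ℕ} (hn : 0 < n) {μ : ℝ} {v : ℝ≥0}
    {f : Fin n → Ω → ℝ} (hf : ∀ i, HasLaw (f i) (gaussianReal μ v) P) (hindep : iIndepFun f P) :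
    HasLaw (fun ω ↦ (∑ i, f i ω) / n) (gaussianReal μ (v / n)) P := by
  have h := gaussianReal_div_const (hindep.hasLaw_sum_gaussianReal hf) n
  simp only [sum_const, card_univ, Fintype.card_fin, nsmul_eq_mul] at h
  have hn' : (n : ℝ) ≠ 0 := by positivity
  convert h using 2
  · field_simp
  · ext
    simp [field]

lemma integral_pow_gaussianReal_zero_of_odd (v : ℝ≥0) {k : ℕ} (hk : Odd k) :
    ∫ x, x ^ k ∂gaussianReal 0 v = 0 := by
  have h := congrArg (fun ν ↦ ∫ x, x ^ k ∂ν) (gaussianReal_map_neg (μ := 0) (v := v))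
  simp only [neg_zero] at h
  rw [integral_map (by fun_prop) (by fun_prop)] at h
  simp only [hk.neg_pow, integral_neg] at h
  linarith

lemma integral_sq_gaussianReal_zero (v : ℝ≥0) :
    ∫ x, x ^ 2 ∂gaussianReal 0 v = v := by
  have h := variance_id_gaussianReal (μ := 0) (v := v)
  rw [variance_eq_sub (memLp_id_gaussianReal 2)] at h
  simpa [integral_id_gaussianReal] using h

lemma variance_sq_add_const_mul [IsProbabilityMeasure P] {X : Ω → ℝ} (hX : MemLp X 4 P)
    (h1 : P[X] = 0) (h3 : ∫ ω, X ω ^ 3 ∂P = 0) (c : ℝ) :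
    Var[fun ω ↦ X ω ^ 2 + c * X ω; P] = Var[fun ω ↦ X ω ^ 2; P] + c ^ 2 * Var[X; P] := by
  have : ENNReal.HolderTriple 4 4 2 := ⟨by
    rw [show (4 : ℝ≥0∞) = 2 * 2 by norm_num, ENNReal.mul_inv (by simp) (by simp), ← mul_add,
      ENNReal.inv_two_add_inv_two, mul_one]⟩
  have hX2 : MemLp X 2 P := hX.mono_exponent (by norm_num)
  have hsq : MemLp (fun ω ↦ X ω ^ 2) 2 P := by simpa only [sq] using hX.mul' hX
  have hcov : cov[fun ω ↦ X ω ^ 2, X; P] = 0 := by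
    rw [covariance_eq_sub hsq hX2, h1, mul_zero, sub_zero]
    simp only [Pi.mul_apply]
    simp_rw [← pow_succ, h3]
  rw [variance_fun_add hsq (hX2.const_mul c), covariance_const_mul_right, hcov,
    variance_const_mul]
  ring

end ProbabilityTheory

/-- The RDD statistic has the same expectation as the DRND statistic,
`E[z_n] = E[y_n] = 1/n`, and achieves variance reduction:
`Var(z_n) ≤ Var(y_n)`, where `z_n = (f̄ − μ)²/σ²`, `y_n = (f̄² − μ²)/σ²`,
and `f̄` is the sample mean of `n` i.i.d. Gaussian `N(μ, σ²)` variables. -/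
theorem rdd_vs_drnd
    {Ω : Type*} [MeasurableSpace Ω] (P : Measure Ω) [IsProbabilityMeasure P]
    (n : ℕ) (hn : 0 < n) (μ σ : ℝ) (hσ : 0 < σ)
    (f : Fin n → Ω → ℝ) (hmeas : ∀ i, Measurable (f i))
    (hindep : iIndepFun f P)
    (hdist : ∀ i, Measure.map (f i) P = gaussianReal μ ⟨σ ^ 2, sq_nonneg σ⟩) :
    (∫ ω, ((∑ i, f i ω) / n - μ) ^ 2 / σ ^ 2 ∂P = 1 / n) ∧
    (∫ ω, (((∑ i, f i ω) / n) ^ 2 - μ ^ 2) / σ ^ 2 ∂P = 1 / n) ∧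
    variance (fun ω => ((∑ i, f i ω) / n - μ) ^ 2 / σ ^ 2) P ≤
      variance (fun ω => (((∑ i, f i ω) / n) ^ 2 - μ ^ 2) / σ ^ 2) P := by
  have hσ0 : σ ≠ 0 := hσ.ne'
  set X : Ω → ℝ := fun ω ↦ ((∑ i, f i ω) / n - μ) / σ with hXdef
  have hX : HasLaw X (gaussianReal 0 (n : ℝ≥0)⁻¹) P := by
    have h := gaussianReal_div_const (gaussianReal_sub_const
      (hindep.hasLaw_sampleMean hn fun i ↦ ⟨(hmeas i).aemeasurable, hdist i⟩) μ) σ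
    convert h using 2
    · simp
    · ext
      change ((n : ℝ))⁻¹ = σ ^ 2 / n / σ ^ 2
      field_simp
  have hX4 : MemLp X 4 P := hX.hasGaussianLaw.memLp (by simp)
  have hmoment (k : ℕ) : ∫ ω, X ω ^ k ∂P = ∫ x, x ^ k ∂gaussianReal 0 (n : ℝ≥0)⁻¹ :=
    hX.integral_comp (f := fun x ↦ x ^ k) (by fun_prop)
  have hX1 : P[X] = 0 := by rw [hX.integral_eq, integral_id_gaussianReal]
  have hX2 : ∫ ω, X ω ^ 2 ∂P = 1 / n := by simp [hmoment, integral_sq_gaussianReal_zero]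
  have hX3 : ∫ ω, X ω ^ 3 ∂P = 0 := by
    rw [hmoment, integral_pow_gaussianReal_zero_of_odd _ (by decide)]
  have hz (ω : Ω) : ((∑ i, f i ω) / n - μ) ^ 2 / σ ^ 2 = X ω ^ 2 := by
    simp only [hXdef]
    field_simp
  have hy (ω : Ω) : (((∑ i, f i ω) / n) ^ 2 - μ ^ 2) / σ ^ 2 = X ω ^ 2 + 2 * μ / σ * X ω := by
    simp only [hXdef]
    field_simp
    ring
  simp_rw [hz, hy]
  refine ⟨hX2, ?_, ?_⟩
  · rw [integral_add (hX4.mono_exponent (by norm_num)).integrable_sq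
      ((hX4.integrable (by norm_num)).const_mul _), integral_const_mul, hX1, hX2]
    simp
  · rw [variance_sq_add_const_mul hX4 hX1 hX3]
    exact le_add_of_nonneg_right (mul_nonneg (sq_nonneg _) (variance_nonneg _ _))
end

section
/- The characteristic function (in real form) of the product of two independent standard Gaussian random variables is E[cos(t·U·V)] = (1 + t²)^{−1/2} for every real t. -/
open MeasureTheory ProbabilityTheory Real
open scoped NNReal ENNReal

/-- Change of variables: integral against the standard Gaussian measure as a
Lebesgue integral against the density. -/
lemma integral_std_gaussian_aux (g : ℝ → ℝ) :
    ∫ x, g x ∂(gaussianReal 0 1) = ∫ x, gaussianPDFReal 0 1 x * g x := by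
  rw [gaussianReal_of_var_ne_zero _ one_ne_zero]
  have h : (gaussianPDF 0 1) = fun x => ((Real.toNNReal (gaussianPDFReal 0 1 x) : ℝ≥0) : ℝ≥0∞) :=
    rfl
  rw [h, integral_withDensity_eq_integral_smul
    ((measurable_gaussianPDFReal 0 1).real_toNNReal) g]
  congr 1 with x
  rw [NNReal.smul_def, Real.coe_toNNReal _ (gaussianPDFReal_nonneg 0 1 x), smul_eq_mul]

/-- The key Fourier integral of a Gaussian, real form. -/
lemma integral_exp_cos_aux (a : ℝ) :
    ∫ x : ℝ, Real.exp (-x ^ 2 / 2) * Real.cos (a * x)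
      = Real.sqrt (2 * π) * Real.exp (-a ^ 2 / 2) := by
  have hb : ((-1 / 2 : ℂ)).re < 0 := by norm_num
  have h := integral_cexp_quadratic hb (Complex.I * a) 0
  have hint := integrable_cexp_quadratic' hb (Complex.I * (a : ℂ)) 0
  have hre := congrArg Complex.re h
  have hswap := integral_re hint
  simp only [RCLike.re_to_complex] at hswap
  rw [← hswap] at hre
  have hL : ∀ x : ℝ, ((Complex.exp ((-1 / 2 : ℂ) * (x : ℂ) ^ 2 + Complex.I * a * x + 0)).re)
      = Real.exp (-x ^ 2 / 2) * Real.cos (a * x) := by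
    intro x
    rw [Complex.exp_re]
    have hre' : ((-1 / 2 : ℂ) * (x : ℂ) ^ 2 + Complex.I * a * x + 0).re = -x ^ 2 / 2 := by
      simp [Complex.add_re, Complex.mul_re, Complex.mul_im, ← Complex.ofReal_pow]
      ring
    have him' : ((-1 / 2 : ℂ) * (x : ℂ) ^ 2 + Complex.I * a * x + 0).im = a * x := by
      simp [Complex.add_im, Complex.mul_re, Complex.mul_im, ← Complex.ofReal_pow]
    rw [hre', him']
  rw [integral_congr_ae (Filter.Eventually.of_forall hL)] at hre
  rw [hre]
  have h1 : ((0 : ℂ) - (Complex.I * a) ^ 2 / (4 * (-1 / 2 : ℂ))) = ((-a ^ 2 / 2 : ℝ) : ℂ) := by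
    rw [mul_pow, Complex.I_sq]
    push_cast
    ring
  have h2 : ((π : ℂ) / -(-1 / 2 : ℂ)) = ((2 * π : ℝ) : ℂ) := by
    push_cast; ring
  have h3 : ((2 * π : ℝ) : ℂ) ^ (1 / 2 : ℂ) = ((Real.sqrt (2 * π) : ℝ) : ℂ) := by
    rw [show (1 / 2 : ℂ) = ((1 / 2 : ℝ) : ℂ) by norm_num,
      ← Complex.ofReal_cpow (by positivity), Real.sqrt_eq_rpow]
  rw [h1, h2, h3, ← Complex.ofReal_exp, ← Complex.ofReal_mul, Complex.ofReal_re]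

/-- The real characteristic function of the standard Gaussian. -/
lemma integral_cos_std_gaussian (c : ℝ) :
    ∫ y, Real.cos (c * y) ∂(gaussianReal 0 1) = Real.exp (-c ^ 2 / 2) := by
  rw [integral_std_gaussian_aux]
  have hpdf : ∀ y : ℝ, gaussianPDFReal 0 1 y = (Real.sqrt (2 * π))⁻¹ * Real.exp (-y ^ 2 / 2) := by
    intro y
    rw [gaussianPDFReal]
    norm_num
  simp_rw [hpdf, mul_assoc]
  rw [integral_const_mul, integral_exp_cos_aux c, ← mul_assoc,
    inv_mul_cancel₀ (by positivity : Real.sqrt (2 * π) ≠ 0), one_mul]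

/-- The outer Gaussian integral. -/
lemma integral_exp_sq_std_gaussian (t : ℝ) :
    ∫ x, Real.exp (-(t * x) ^ 2 / 2) ∂(gaussianReal 0 1)
      = (1 + t ^ 2) ^ (-(1 / 2 : ℝ)) := by
  rw [integral_std_gaussian_aux]
  have hpdf : ∀ x : ℝ, gaussianPDFReal 0 1 x = (Real.sqrt (2 * π))⁻¹ * Real.exp (-x ^ 2 / 2) := by
    intro x
    rw [gaussianPDFReal]
    norm_num
  have hcomb : ∀ x : ℝ, gaussianPDFReal 0 1 x * Real.exp (-(t * x) ^ 2 / 2)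
      = (Real.sqrt (2 * π))⁻¹ * Real.exp (-((1 + t ^ 2) / 2) * x ^ 2) := by
    intro x
    rw [hpdf, mul_assoc, ← Real.exp_add]
    congr 2
    ring
  simp_rw [hcomb]
  rw [integral_const_mul, integral_gaussian]
  have hpos : (0 : ℝ) < 1 + t ^ 2 := by positivity
  have harg : (2 * π)⁻¹ * (π / ((1 + t ^ 2) / 2)) = (1 + t ^ 2)⁻¹ := by
    field_simp
  rw [← Real.sqrt_inv, ← Real.sqrt_mul (by positivity), harg,
    Real.rpow_neg hpos.le, ← Real.sqrt_eq_rpow, ← Real.sqrt_inv]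

/-- The characteristic function (in real form) of the product of two
independent standard Gaussian random variables is
`E[cos(t·U·V)] = (1 + t²)^(−1/2)` for every real `t`. -/
theorem charfun_prod_std_gaussian
    {Ω : Type*} [MeasurableSpace Ω] (P : Measure Ω) [IsProbabilityMeasure P]
    (U V : Ω → ℝ) (hU : Measurable U) (hV : Measurable V)
    (hUV : IndepFun U V P)
    (hUdist : Measure.map U P = gaussianReal 0 1)
    (hVdist : Measure.map V P = gaussianReal 0 1)
    (t : ℝ) :
    ∫ ω, Real.cos (t * (U ω * V ω)) ∂P = (1 + t ^ 2) ^ (-(1 / 2 : ℝ)) := by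
  have hmap : Measure.map (fun ω => (U ω, V ω)) P
      = (gaussianReal 0 1).prod (gaussianReal 0 1) := by
    rw [(indepFun_iff_map_prod_eq_prod_map_map hU.aemeasurable hV.aemeasurable).mp hUV,
      hUdist, hVdist]
  have hmeas : Measurable (fun p : ℝ × ℝ => Real.cos (t * (p.1 * p.2))) :=
    (Real.continuous_cos.comp
      (continuous_const.mul (continuous_fst.mul continuous_snd))).measurable
  have h1 : ∫ ω, Real.cos (t * (U ω * V ω)) ∂P
      = ∫ p : ℝ × ℝ, Real.cos (t * (p.1 * p.2))
          ∂((gaussianReal 0 1).prod (gaussianReal 0 1)) := by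
    rw [← hmap, integral_map (hU.prodMk hV).aemeasurable hmeas.aestronglyMeasurable]
  rw [h1]
  have hint : Integrable (fun p : ℝ × ℝ => Real.cos (t * (p.1 * p.2)))
      ((gaussianReal 0 1).prod (gaussianReal 0 1)) := by
    refine (integrable_const (1 : ℝ)).mono' hmeas.aestronglyMeasurable ?_
    exact Filter.Eventually.of_forall fun p => by
      simp only [Real.norm_eq_abs]
      exact Real.abs_cos_le_one _
  rw [MeasureTheory.integral_prod _ hint]
  have h2 : ∀ x : ℝ, ∫ y, Real.cos (t * (x * y)) ∂(gaussianReal 0 1)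
      = Real.exp (-(t * x) ^ 2 / 2) := by
    intro x
    simp_rw [show ∀ y : ℝ, t * (x * y) = (t * x) * y from fun y => by ring]
    exact integral_cos_std_gaussian (t * x)
  simp_rw [h2]
  exact integral_exp_sq_std_gaussian t
end
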